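/- Let H be a complex Hilbert space and let A, B, C, D be closed subspaces of H with A ⊥ B and C ⊥ D. Then the 3OA law (orthoarguesian law) holds in the lattice of closed subspaces of H: (A ∨ B) ∩ (C ∨ D) ⊆ A ∨ (B ∩ (C ∨ ((A ∨ D) ∩ (B ∨ C)))), where X ∨ Y denotes the topological closure of the subspace sum X + Y. -/

import Mathlib

/-!
If `K ⟂ L` with `K` complete and `L` closed, then `K ⊔ L` is the preimage of `L` under the
continuous map `x ↦ x - P_K x`, so it is already closed. Hence both closures on the left are plain
sums, and an element `x = a + b = c + d` of the left side is handled as in any module: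
`c - b = a - d` lies in `(A ⊔ D) ⊓ (B ⊔ C)`, so `b = c - (c - b)` lies in
`B ⊓ (C ⊔ ((A ⊔ D) ⊓ (B ⊔ C)))`.
-/

namespace Submodule

theorem threeOA_le {R M : Type*} [Ring R] [AddCommGroup M] [Module R M]
    (A B C D : Submodule R M) :
    (A ⊔ B) ⊓ (C ⊔ D) ≤ A ⊔ (B ⊓ (C ⊔ ((A ⊔ D) ⊓ (B ⊔ C)))) := by
  rintro x ⟨hAB, hCD⟩
  obtain ⟨a, ha, b, hb, rfl⟩ := mem_sup.mp hAB
  obtain ⟨c, hc, d, hd, hcd⟩ := mem_sup.mp hCD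
  have hcb : c - b ∈ (A ⊔ D) ⊓ (B ⊔ C) := by
    refine ⟨?_, sub_mem (mem_sup_right hc) (mem_sup_left hb)⟩
    rw [show c - b = a - d by rw [sub_eq_sub_iff_add_eq_add]; exact hcd]
    exact sub_mem (mem_sup_left ha) (mem_sup_right hd)
  have hb' : b ∈ B ⊓ (C ⊔ ((A ⊔ D) ⊓ (B ⊔ C))) :=
    ⟨hb, by simpa using sub_mem (mem_sup_left hc) (mem_sup_right hcb)⟩
  exact add_mem (mem_sup_left ha) (mem_sup_right hb')

variable {𝕜 E : Type*} [RCLike 𝕜] [NormedAddCommGroup E] [InnerProductSpace 𝕜 E]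

theorem mem_sup_iff_sub_starProjection_mem {K L : Submodule 𝕜 E} [K.HasOrthogonalProjection]
    (hKL : K ⟂ L) {x : E} : x ∈ K ⊔ L ↔ x - K.starProjection x ∈ L := by
  refine ⟨fun hx => ?_, fun hx => ?_⟩
  · obtain ⟨k, hk, l, hl, rfl⟩ := mem_sup.mp hx
    have hl0 : K.starProjection l = 0 := by
      simp [starProjection_apply, orthogonalProjectionOnto_apply_of_mem_orthogonal (hKL.symm hl)]
    rwa [map_add, starProjection_eq_self_iff.mpr hk, hl0, add_zero, add_sub_cancel_left]
  · simpa using add_mem (mem_sup_left (K.starProjection_apply_mem x)) (mem_sup_right hx)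

theorem isClosed_sup_of_isOrtho {K L : Submodule 𝕜 E} [K.HasOrthogonalProjection]
    (hL : IsClosed (L : Set E)) (hKL : K ⟂ L) : IsClosed ((K ⊔ L : Submodule 𝕜 E) : Set E) := by
  have : ((K ⊔ L : Submodule 𝕜 E) : Set E) = (fun x => x - K.starProjection x) ⁻¹' L :=
    Set.ext fun _ => mem_sup_iff_sub_starProjection_mem hKL
  rw [this]
  exact hL.preimage (continuous_id.sub K.starProjection.continuous)

end Submodule

open Submodule in
theorem threeOA_in_closed_subspaces {H : Type*} [NormedAddCommGroup H]
    [InnerProductSpace ℂ H] [CompleteSpace H]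
    (A B C D : Submodule ℂ H)
    (hA : IsClosed (A : Set H)) (hB : IsClosed (B : Set H))
    (hC : IsClosed (C : Set H)) (hD : IsClosed (D : Set H))
    (hAB : A ≤ Bᗮ) (hCD : C ≤ Dᗮ) :
    (A ⊔ B).topologicalClosure ⊓ (C ⊔ D).topologicalClosure ≤
      (A ⊔ (B ⊓ (C ⊔ ((A ⊔ D).topologicalClosure ⊓
        (B ⊔ C).topologicalClosure)).topologicalClosure)).topologicalClosure := by
  have : CompleteSpace A := hA.completeSpace_coe
  have : CompleteSpace C := hC.completeSpace_coe
  rw [(isClosed_sup_of_isOrtho hB hAB).submodule_topologicalClosure_eq,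
    (isClosed_sup_of_isOrtho hD hCD).submodule_topologicalClosure_eq]
  refine (threeOA_le A B C D).trans (le_trans ?_ (le_topologicalClosure _))
  gcongr
  exact (sup_le_sup_left (inf_le_inf (le_topologicalClosure _) (le_topologicalClosure _)) C).trans
    (le_topologicalClosure _)
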